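/- Work in ℝ³. Let u, f : ℝ³ → ℝ³ be C¹ and compactly supported with div u(x) = 0 for all x, and let A1, A2, A3, A4, A5 ∈ ℝ satisfy A1 − A3 = 0, A5 − A4 = 0, and A2 = A4. Then for every constant vector e ∈ ℝ³: ∫ ⟨f_m(x), x × e⟩ dx = 0 (× the cross product); that is, the mass-diffusion correction f_m produces no net angular momentum. -/

import Mathlib

open MeasureTheory RealInnerProductSpace

/-- `div v x = tr (Dv(x))`. -/
noncomputable def vdiv
    (v : EuclideanSpace ℝ (Fin 3) → EuclideanSpace ℝ (Fin 3))
    (x : EuclideanSpace ℝ (Fin 3)) : ℝ :=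
  LinearMap.trace ℝ _ (fderiv ℝ v x).toLinearMap

/-- The viscous momentum flux
`f_m = A1 (Df)*[u] + A2 Df[u] + A3 (Du)*[f] + A4 Du[f] + A5 (div f) u`. -/
noncomputable def viscFlux (A1 A2 A3 A4 A5 : ℝ)
    (u f : EuclideanSpace ℝ (Fin 3) → EuclideanSpace ℝ (Fin 3))
    (x : EuclideanSpace ℝ (Fin 3)) : EuclideanSpace ℝ (Fin 3) :=
  A1 • (ContinuousLinearMap.adjoint (fderiv ℝ f x)) (u x)
    + A2 • (fderiv ℝ f x) (u x)
    + A3 • (ContinuousLinearMap.adjoint (fderiv ℝ u x)) (f x)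
    + A4 • (fderiv ℝ u x) (f x)
    + A5 • (vdiv f x • u x)

/-- The cross product on `ℝ³`. -/
noncomputable def cross (a b : EuclideanSpace ℝ (Fin 3)) : EuclideanSpace ℝ (Fin 3) :=
  (WithLp.equiv 2 (Fin 3 → ℝ)).symm
    ![a 1 * b 2 - a 2 * b 1, a 2 * b 0 - a 0 * b 2, a 0 * b 1 - a 1 * b 0]

/-! Put `a = A1 = A3` and `b = A2 = A4 = A5`, and let `Φ` be a skew-adjoint linear map (here
`Φ x = x × e`). Then `⟪f_m, Φ x⟫` is the divergence of
`W = a ⟪u, f⟫ Φ + b (⟪u, Φ⟫ f + ⟪f, Φ⟫ u)`: the product rule produces the terms of `f_m`, skewness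
of `Φ` gives `div Φ = 0` and cancels `⟪u, Φ f⟫ + ⟪f, Φ u⟫`, and `div u = 0` removes the last
term. The divergence of a compactly supported `C¹` field integrates to zero, since each directional
derivative `∫ DW(x) v dx` does (integration by parts against `1`). -/

section NormedSpace

variable {E F : Type*} [NormedAddCommGroup E] [NormedSpace ℝ E] [NormedAddCommGroup F]
  [NormedSpace ℝ F]

theorem trace_fderiv_smul [FiniteDimensional ℝ E] {c : E → ℝ} {W : E → E} {x : E}
    (hc : DifferentiableAt ℝ c x) (hW : DifferentiableAt ℝ W x) :
    LinearMap.trace ℝ E (fderiv ℝ (fun y => c y • W y) x) =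
      fderiv ℝ c x (W x) + c x * LinearMap.trace ℝ E (fderiv ℝ W x) := by
  rw [fderiv_fun_smul hc hW, ContinuousLinearMap.toLinearMap_add, map_add,
    ContinuousLinearMap.toLinearMap_smul, map_smul, smul_eq_mul, add_comm]
  exact congrArg (· + _) (LinearMap.trace_smulRight _ _)

variable [MeasurableSpace E] [BorelSpace E] {μ : Measure E} {W : E → F}

theorem HasCompactSupport.integrable_fderiv_apply [IsFiniteMeasureOnCompacts μ]
    (hcW : HasCompactSupport W) (hW : ContDiff ℝ 1 W) (v : E) :
    Integrable (fun x => fderiv ℝ W x v) μ :=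
  ((hW.continuous_fderiv one_ne_zero).clm_apply continuous_const).integrable_of_hasCompactSupport
    ((hcW.fderiv ℝ).comp_left (g := fun L : E →L[ℝ] F => L v) rfl)

theorem HasCompactSupport.integral_fderiv_apply_eq_zero [FiniteDimensional ℝ E]
    [μ.IsAddHaarMeasure] (hcW : HasCompactSupport W) (hW : ContDiff ℝ 1 W) (v : E) :
    ∫ x, fderiv ℝ W x v ∂μ = 0 := by
  have h := integral_smul_fderiv_eq_neg_fderiv_smul_of_integrable (μ := μ) (f := fun _ => (1 : ℝ))
    (g := W) (v := v) (by simp) (by simpa using hcW.integrable_fderiv_apply hW v)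
    (by simpa using hW.continuous.integrable_of_hasCompactSupport hcW)
    (fun _ _ => differentiableAt_const _) (fun y _ => hW.differentiable one_ne_zero y)
  simpa using h

end NormedSpace

section InnerProductSpace

variable {E : Type*} [NormedAddCommGroup E] [InnerProductSpace ℝ E] [FiniteDimensional ℝ E]

theorem LinearMap.trace_eq_zero_of_skew (T : E →ₗ[ℝ] E) (hT : ∀ a b, ⟪T a, b⟫ = -⟪a, T b⟫) :
    LinearMap.trace ℝ E T = 0 := by
  let b := stdOrthonormalBasis ℝ E
  rw [LinearMap.trace_eq_sum_inner T b]
  refine Finset.sum_eq_zero fun i _ => ?_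
  have h := hT (b i) (b i)
  rw [real_inner_comm] at h
  linarith

theorem HasCompactSupport.integral_trace_fderiv_eq_zero [MeasurableSpace E] [BorelSpace E]
    {μ : Measure E} [μ.IsAddHaarMeasure] {W : E → E} (hcW : HasCompactSupport W)
    (hW : ContDiff ℝ 1 W) :
    ∫ x, LinearMap.trace ℝ E (fderiv ℝ W x) ∂μ = 0 := by
  let b := stdOrthonormalBasis ℝ E
  simp only [LinearMap.trace_eq_sum_inner _ b, ContinuousLinearMap.coe_coe]
  rw [integral_finsetSum _ fun i _ => (hcW.integrable_fderiv_apply hW (b i)).const_inner (b i)]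
  refine Finset.sum_eq_zero fun i _ => ?_
  rw [integral_inner (hcW.integrable_fderiv_apply hW (b i)),
    hcW.integral_fderiv_apply_eq_zero hW, inner_zero_right]

variable (Φ : E →L[ℝ] E) {u f : E → E} {x : E}

theorem trace_fderiv_inner_smul_skew (hΦ : ∀ a b, ⟪Φ a, b⟫ = -⟪a, Φ b⟫)
    (hu : DifferentiableAt ℝ u x) (hf : DifferentiableAt ℝ f x) :
    LinearMap.trace ℝ E (fderiv ℝ (fun y => ⟪u y, f y⟫ • Φ y) x) =
      ⟪ContinuousLinearMap.adjoint (fderiv ℝ f x) (u x), Φ x⟫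
        + ⟪ContinuousLinearMap.adjoint (fderiv ℝ u x) (f x), Φ x⟫ := by
  rw [trace_fderiv_smul (hu.inner ℝ hf) Φ.differentiableAt, Φ.fderiv,
    LinearMap.trace_eq_zero_of_skew _ hΦ, fderiv_inner_apply ℝ hu hf,
    ContinuousLinearMap.adjoint_inner_left, ContinuousLinearMap.adjoint_inner_left,
    real_inner_comm (f x)]
  ring

theorem trace_fderiv_inner_skew_smul_add (hΦ : ∀ a b, ⟪Φ a, b⟫ = -⟪a, Φ b⟫)
    (hu : DifferentiableAt ℝ u x) (hf : DifferentiableAt ℝ f x)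
    (hdiv : LinearMap.trace ℝ E (fderiv ℝ u x) = 0) :
    LinearMap.trace ℝ E (fderiv ℝ (fun y => ⟪u y, Φ y⟫ • f y + ⟪f y, Φ y⟫ • u y) x) =
      ⟪fderiv ℝ f x (u x) + fderiv ℝ u x (f x) + LinearMap.trace ℝ E (fderiv ℝ f x) • u x,
        Φ x⟫ := by
  have huΦ := hu.inner ℝ Φ.differentiableAt
  have hfΦ := hf.inner ℝ Φ.differentiableAt
  rw [fderiv_fun_add (huΦ.fun_smul hf) (hfΦ.fun_smul hu), ContinuousLinearMap.toLinearMap_add,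
    map_add, trace_fderiv_smul huΦ hf, trace_fderiv_smul hfΦ hu, hdiv,
    fderiv_inner_apply ℝ hu Φ.differentiableAt, fderiv_inner_apply ℝ hf Φ.differentiableAt,
    Φ.fderiv, inner_add_left, inner_add_left, real_inner_smul_left,
    ← real_inner_comm (f x) (Φ (u x))]
  linear_combination hΦ (u x) (f x)

end InnerProductSpace

section AngularMomentumFlux

variable {E : Type*} [NormedAddCommGroup E] [InnerProductSpace ℝ E] (a b : ℝ) (u f : E → E)
  (Φ : E →L[ℝ] E)

def angularMomentumFlux (y : E) : E :=
  a • (⟪u y, f y⟫ • Φ y) + b • (⟪u y, Φ y⟫ • f y + ⟪f y, Φ y⟫ • u y)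

variable {a b u f}

theorem contDiff_angularMomentumFlux {n : WithTop ℕ∞} (hu : ContDiff ℝ n u) (hf : ContDiff ℝ n f) :
    ContDiff ℝ n (angularMomentumFlux a b u f Φ) := by
  have hΦ : ContDiff ℝ n Φ := Φ.contDiff
  exact (contDiff_const.smul ((hu.inner ℝ hf).smul hΦ)).add
    (contDiff_const.smul (((hu.inner ℝ hΦ).smul hf).add ((hf.inner ℝ hΦ).smul hu)))

theorem hasCompactSupport_angularMomentumFlux (hu : HasCompactSupport u)
    (hf : HasCompactSupport f) : HasCompactSupport (angularMomentumFlux a b u f Φ) :=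
  ((hu.comp₂_left hf (inner_zero_left 0)).smul_right.smul_left (f := fun _ => a)).add
    ((hf.smul_left.add hu.smul_left).smul_left (f := fun _ => b))

variable [FiniteDimensional ℝ E] {x : E}

theorem trace_fderiv_angularMomentumFlux (hΦ : ∀ a b, ⟪Φ a, b⟫ = -⟪a, Φ b⟫)
    (hu : DifferentiableAt ℝ u x) (hf : DifferentiableAt ℝ f x)
    (hdiv : LinearMap.trace ℝ E (fderiv ℝ u x) = 0) :
    LinearMap.trace ℝ E (fderiv ℝ (angularMomentumFlux a b u f Φ) x) =
      a * (⟪ContinuousLinearMap.adjoint (fderiv ℝ f x) (u x), Φ x⟫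
        + ⟪ContinuousLinearMap.adjoint (fderiv ℝ u x) (f x), Φ x⟫)
      + b * ⟪fderiv ℝ f x (u x) + fderiv ℝ u x (f x)
        + LinearMap.trace ℝ E (fderiv ℝ f x) • u x, Φ x⟫ := by
  have hΦx := Φ.differentiableAt (x := x)
  have h₁ : DifferentiableAt ℝ (fun y => ⟪u y, f y⟫ • Φ y) x := (hu.inner ℝ hf).fun_smul hΦx
  have h₂ : DifferentiableAt ℝ (fun y => ⟪u y, Φ y⟫ • f y + ⟪f y, Φ y⟫ • u y) x :=
    ((hu.inner ℝ hΦx).fun_smul hf).fun_add ((hf.inner ℝ hΦx).fun_smul hu)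
  unfold angularMomentumFlux
  rw [fderiv_fun_add (h₁.fun_const_smul a) (h₂.fun_const_smul b), fderiv_fun_const_smul h₁,
    fderiv_fun_const_smul h₂, ContinuousLinearMap.toLinearMap_add, map_add,
    ContinuousLinearMap.toLinearMap_smul, ContinuousLinearMap.toLinearMap_smul, map_smul, map_smul,
    trace_fderiv_inner_smul_skew Φ hΦ hu hf, trace_fderiv_inner_skew_smul_add Φ hΦ hu hf hdiv,
    smul_eq_mul, smul_eq_mul]

end AngularMomentumFlux

local notation "E3" => EuclideanSpace ℝ (Fin 3)

noncomputable def crossL (e : E3) : E3 →L[ℝ] E3 :=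
  LinearMap.toContinuousLinearMap
    { toFun := fun x => cross x e
      map_add' := fun a b => by ext i; fin_cases i <;> simp [cross] <;> ring
      map_smul' := fun c a => by ext i; fin_cases i <;> simp [cross] <;> ring }

theorem crossL_apply (e x : E3) : crossL e x = cross x e := rfl

theorem inner_crossL_left (e a b : E3) : ⟪crossL e a, b⟫ = -⟪a, crossL e b⟫ := by
  simp only [crossL_apply, cross, WithLp.equiv_symm_apply, PiLp.inner_apply, RCLike.inner_apply,
    Real.ringHom_apply, Fin.sum_univ_three, Matrix.cons_val_zero, Matrix.cons_val_one,
    Matrix.cons_val]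
  ring

theorem inner_viscFlux_eq_vdiv_angularMomentumFlux (a b : ℝ) {u f : E3 → E3} (Φ : E3 →L[ℝ] E3)
    (hΦ : ∀ a b, ⟪Φ a, b⟫ = -⟪a, Φ b⟫) {x : E3} (hu : DifferentiableAt ℝ u x)
    (hf : DifferentiableAt ℝ f x) (hdiv : vdiv u x = 0) :
    ⟪viscFlux a b a b b u f x, Φ x⟫ = vdiv (angularMomentumFlux a b u f Φ) x := by
  rw [vdiv, trace_fderiv_angularMomentumFlux Φ hΦ hu hf hdiv]
  simp only [viscFlux, vdiv, inner_add_left, real_inner_smul_left]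
  ring

/-- Part 3 of Theorem 2: if `A1 − A3 = 0`, `A5 − A4 = 0` and `A2 = A4`, the
mass-diffusion correction `f_m` produces no net angular momentum. -/
theorem viscFlux_angular_momentum
    (u f : EuclideanSpace ℝ (Fin 3) → EuclideanSpace ℝ (Fin 3))
    (hu : ContDiff ℝ 1 u) (hf : ContDiff ℝ 1 f)
    (hcu : HasCompactSupport u) (hcf : HasCompactSupport f)
    (hdiv : ∀ x, vdiv u x = 0)
    (A1 A2 A3 A4 A5 : ℝ)
    (h1 : A1 - A3 = 0) (h2 : A5 - A4 = 0) (h3 : A2 = A4)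
    (e : EuclideanSpace ℝ (Fin 3)) :
    ∫ x, ⟪viscFlux A1 A2 A3 A4 A5 u f x, cross x e⟫ = 0 := by
  obtain rfl : A1 = A3 := sub_eq_zero.mp h1
  obtain rfl : A5 = A4 := sub_eq_zero.mp h2
  subst h3
  calc ∫ x, ⟪viscFlux A1 A2 A1 A2 A2 u f x, crossL e x⟫
      = ∫ x, vdiv (angularMomentumFlux A1 A2 u f (crossL e)) x := by
        congr 1 with x
        exact inner_viscFlux_eq_vdiv_angularMomentumFlux A1 A2 (crossL e) (inner_crossL_left e)
          (hu.differentiable one_ne_zero x) (hf.differentiable one_ne_zero x) (hdiv x)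
    _ = 0 := (hasCompactSupport_angularMomentumFlux _ hcu hcf).integral_trace_fderiv_eq_zero
        (contDiff_angularMomentumFlux _ hu hf)
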